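/- arXiv:math/0503398 — 2 statements merged into one kernel-verified Lean document; each statement's English description precedes it below -/
import Mathlib

section
/- For every integer ν ≥ 1, the L-dimension of the subspace Γ_ν of Maps(F̂_{n+1}, F̂_{n+1}) spanned by the monomial operators τ^l ∘ d_s^μ ∘ Δ₁^{i₁} ∘ … ∘ Δ_n^{i_n} with l + μ + i₁ + … + i_n ≤ ν equals the binomial coefficient C(ν + n + 2, n + 2). -/
/-!
Setting: `q = p ^ e`, `L` an algebraically closed field of characteristic `p`
containing `F_q(x)` (via the ring embedding `φ`), `root` the unique `q`-th root map
on `L`.  `CIdx n` indexes the basis monomials `e(m, k₁, …, k_n)` (with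
`m ≤ min(k₁, …, k_n)`) of the space `F̂_{n+1} = CIdx n →₀ L` of `F_q`-linear
polynomials; `tauOp`, `dsOp`, `deltaOp` are the operators `τ`, `d_s`, `Δ_j`, and
`monOp` is the monomial operator `τ^l ∘ d_s^μ ∘ Δ₁^{i₁} ∘ … ∘ Δ_n^{i_n}`.
-/

/-- Index set of the monomial basis `e(m, k₁, …, k_n)` with `m ≤ min(k₁, …, k_n)`. -/
def CIdx (n : ℕ) : Type := {v : ℕ × (Fin n → ℕ) // ∀ j, v.1 ≤ v.2 j}

/-- `(m, k⃗) ↦ (m+1, k⃗+1)`. -/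
def shiftUp {n : ℕ} (i : CIdx n) : CIdx n :=
  ⟨(i.1.1 + 1, fun j => i.1.2 j + 1), fun j => Nat.succ_le_succ (i.2 j)⟩

/-- `(m, k⃗) ↦ (m-1, k⃗-1)` (truncated subtraction). -/
def shiftDown {n : ℕ} (i : CIdx n) : CIdx n :=
  ⟨(i.1.1 - 1, fun j => i.1.2 j - 1), fun j => Nat.sub_le_sub_right (i.2 j) 1⟩

/-- The operator `τ` : `τ(a·e(m,k⃗)) = a^q · e(m+1, k⃗+1)`. -/
noncomputable def tauOp (L : Type) [Field L] (q n : ℕ) :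
    (CIdx n →₀ L) → (CIdx n →₀ L) :=
  fun f => f.sum fun i a => Finsupp.single (shiftUp i) (a ^ q)

/-- The Carlitz derivative `d_s` : `d_s(a·e(m,k⃗)) = a^{1/q}·[m]^{1/q}·e(m-1,k⃗-1)`
(which vanishes for `m = 0` since `[0] = x^{q^0} - x = 0` and `root 0 = 0`). -/
noncomputable def dsOp (L : Type) [Field L] (root : L → L) (x : L) (q n : ℕ) :
    (CIdx n →₀ L) → (CIdx n →₀ L) :=
  fun f => f.sum fun i a =>
    Finsupp.single (shiftDown i) (root (x ^ q ^ i.1.1 - x) * root a)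

/-- The operator `Δ_j` : `Δ_j(a·e(m,k⃗)) = [k_j]·a·e(m,k⃗)`. -/
noncomputable def deltaOp (L : Type) [Field L] (x : L) (q n : ℕ) (j : Fin n) :
    (CIdx n →₀ L) → (CIdx n →₀ L) :=
  fun f => f.sum fun i a => Finsupp.single i ((x ^ q ^ i.1.2 j - x) * a)

/-- The monomial operator `τ^l ∘ d_s^μ ∘ Δ₁^{i₁} ∘ … ∘ Δ_n^{i_n}`. -/
noncomputable def monOp (L : Type) [Field L] (root : L → L) (x : L) (q n : ℕ)
    (l μ : ℕ) (iv : Fin n → ℕ) : (CIdx n →₀ L) → (CIdx n →₀ L) :=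
  (tauOp L q n)^[l] ∘ (dsOp L root x q n)^[μ] ∘
    (List.ofFn fun j : Fin n => (deltaOp L x q n j)^[iv j]).foldr (· ∘ ·) id

/-!
On a basis vector `e(m, k⃗)` the operator `τ^l d_s^μ Δ₁^{i₁} ⋯ Δ_n^{i_n}` acts as a multiple of
`e(m - μ + l, k⃗ - μ + l)`, the coefficient being the Frobenius twist `c ↦ c^{q^{l-μ}}` of
`A_μ(m) · ∏ [k_j]^{i_j}`, where `A_μ(m)` vanishes for `m < μ` but not for `m = μ`.
Given a linear relation among these operators, induct on `μ`: applying the relation to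
`e(μ₀, k⃗)` and reading off the coefficient of `e(l₀, k⃗ - μ₀ + l₀)` isolates the operators with
`(l, μ) = (l₀, μ₀)`, and since `k ↦ [k]` is injective, what remains is a polynomial identity in
the values `[k_j]` on a box with infinite sides, which separates the exponents `i`.
So the monomial operators are linearly independent, and `dim Γ_ν` is the number of
`(l, μ, i) ∈ ℕ^{n+2}` with `l + μ + ∑ i_j ≤ ν`, which is `C(ν + n + 2, n + 2)` by stars and bars.
-/

def sumLeEquivSumEq (ι : Type*) [Fintype ι] (N : ℕ) :
    {v : ι → ℕ // ∑ i, v i ≤ N} ≃ {P : Option ι → ℕ // ∑ o, P o = N} where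
  toFun v := ⟨fun o => o.elim (N - ∑ i, v.1 i) v.1, by simp [Fintype.sum_option, v.2]⟩
  invFun P := ⟨P.1 ∘ some, by simp [← P.2, Fintype.sum_option]⟩
  left_inv v := rfl
  right_inv P := by
    ext (_ | i)
    · simp [← P.2, Fintype.sum_option]
    · rfl

instance (ι : Type*) [Fintype ι] (N : ℕ) : Finite {v : ι → ℕ // ∑ i, v i ≤ N} := by
  classical exact .of_equiv _ ((sumLeEquivSumEq ι N).trans (Sym.equivNatSumOfFintype _ N).symm).symm

theorem Nat.card_sum_le_eq_choose (ι : Type*) [Fintype ι] (N : ℕ) :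
    Nat.card {v : ι → ℕ // ∑ i, v i ≤ N} = (N + Fintype.card ι).choose (Fintype.card ι) := by
  classical
  rw [Nat.card_congr ((sumLeEquivSumEq ι N).trans (Sym.equivNatSumOfFintype _ N).symm),
    Nat.card_eq_fintype_card, Sym.card_sym_eq_choose, Fintype.card_option,
    add_right_comm, Nat.add_sub_cancel, add_comm, Nat.choose_symm_add]

def tripleSumLeEquiv (n N : ℕ) :
    {t : ℕ × ℕ × (Fin n → ℕ) // t.1 + t.2.1 + ∑ j, t.2.2 j ≤ N} ≃
      {v : Fin (n + 2) → ℕ // ∑ i, v i ≤ N} :=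
  (((Equiv.refl ℕ).prodCongr (Fin.consEquiv fun _ => ℕ)).trans
    (Fin.consEquiv fun _ => ℕ)).subtypeEquiv fun t => by
      simp [Fin.consEquiv, Fin.sum_cons, add_assoc]

instance (n N : ℕ) : Finite {t : ℕ × ℕ × (Fin n → ℕ) // t.1 + t.2.1 + ∑ j, t.2.2 j ≤ N} :=
  .of_equiv _ (tripleSumLeEquiv n N).symm

theorem Nat.card_triple_sum_le_eq_choose (n N : ℕ) :
    Nat.card {t : ℕ × ℕ × (Fin n → ℕ) // t.1 + t.2.1 + ∑ j, t.2.2 j ≤ N} =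
      (N + n + 2).choose (n + 2) := by
  rw [Nat.card_congr (tripleSumLeEquiv n N), Nat.card_sum_le_eq_choose, Fintype.card_fin,
    add_assoc]

theorem linearIndependent_prod_pow_restrict_pi {K ι : Type*} [Field K] [Fintype ι]
    (S : ι → Set K) (hS : ∀ i, (S i).Infinite) :
    LinearIndependent K fun (e : ι → ℕ) (y : Set.pi Set.univ S) => ∏ i, (y : ι → K) i ^ e i := by
  let restrict : MvPolynomial ι K →ₗ[K] (Set.pi Set.univ S → K) :=
    LinearMap.pi fun y => (MvPolynomial.aeval (y : ι → K)).toLinearMap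
  have hker : LinearMap.ker restrict = ⊥ := by
    refine LinearMap.ker_eq_bot'.2 fun P hP => MvPolynomial.funext_set S hS fun y hy => ?_
    simpa [restrict] using congrFun hP ⟨y, hy⟩
  have hmono : (restrict ∘ MvPolynomial.basisMonomials ι K) ∘ Finsupp.equivFunOnFinite.symm =
      fun (e : ι → ℕ) (y : Set.pi Set.univ S) => ∏ i, (y : ι → K) i ^ e i := by
    ext e y
    simp [restrict, MvPolynomial.aeval_monomial, Finsupp.prod_fintype]
  exact hmono ▸ ((MvPolynomial.basisMonomials ι K).linearIndependent.map' restrict hker).comp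
    _ Finsupp.equivFunOnFinite.symm.injective

theorem RatFunc.X_pow_injective (K : Type*) [Field K] :
    Function.Injective fun k : ℕ => (RatFunc.X : RatFunc K) ^ k := by
  intro a b h
  simp only [← RatFunc.algebraMap_X, ← map_pow] at h
  simpa using congrArg Polynomial.natDegree (RatFunc.algebraMap_injective K h)

section CarlitzOperators

variable {L : Type} [Field L] {root : L → L} {x : L} {q n : ℕ}

def carlitzBracket (x : L) (q k : ℕ) : L := x ^ q ^ k - x

@[simp]
theorem carlitzBracket_zero : carlitzBracket x q 0 = 0 := by
  simp [carlitzBracket]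

theorem carlitzBracket_X_injective {K : Type*} [Field K] (φ : RatFunc K →+* L) (hq : 2 ≤ q) :
    Function.Injective (carlitzBracket (φ RatFunc.X) q) := by
  intro a b h
  rw [carlitzBracket, carlitzBracket, sub_left_inj, ← map_pow, ← map_pow] at h
  exact Nat.pow_right_injective hq (RatFunc.X_pow_injective K (φ.injective h))

/-- `dsIterCoeff x q μ m` is the `q^μ`-th power of the coefficient of `d_s^μ e(m, k⃗)`. -/
def dsIterCoeff (x : L) (q : ℕ) : ℕ → ℕ → L
  | 0, _ => 1
  | μ + 1, m => dsIterCoeff x q μ (m - 1) ^ q * carlitzBracket x q m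

theorem dsIterCoeff_eq_zero_of_lt (hq : q ≠ 0) {μ m : ℕ} (h : m < μ) :
    dsIterCoeff x q μ m = 0 := by
  induction μ generalizing m with
  | zero => omega
  | succ μ ih =>
    rcases m with _ | m
    · simp [dsIterCoeff]
    · simp [dsIterCoeff, ih (show m < μ by omega), hq]

theorem dsIterCoeff_self_ne_zero (hbr : ∀ k, 0 < k → carlitzBracket x q k ≠ 0) (μ : ℕ) :
    dsIterCoeff x q μ μ ≠ 0 := by
  induction μ with
  | zero => exact one_ne_zero
  | succ μ ih => exact mul_ne_zero (pow_ne_zero _ ih) (hbr _ μ.succ_pos)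

theorem ne_zero_of_forall_root_pow (hroot : ∀ c, root c ^ q = c) : q ≠ 0 := by
  rintro rfl
  simpa using hroot 0

def rootHom (root : L → L) (hroot1 : ∀ c, root c ^ q = c) (hroot2 : ∀ c, root (c ^ q) = c) :
    Monoid.End L :=
  (⟨⟨root, by simpa using hroot2 1⟩, fun a b => by
    rw [← hroot2 (root a * root b), mul_pow, hroot1, hroot1]⟩ : L →* L)

/-- The Frobenius twist `c ↦ c ^ q ^ (l - μ)`, with `root` inverting `c ↦ c ^ q`. -/
def frobTwist (root : L → L) (q l μ : ℕ) : L → L := (· ^ q)^[l] ∘ root^[μ]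

theorem frobTwist_injective (hroot1 : ∀ c, root c ^ q = c) (hroot2 : ∀ c, root (c ^ q) = c)
    (l μ : ℕ) : Function.Injective (frobTwist root q l μ) :=
  ((Function.LeftInverse.injective hroot2).iterate l).comp
    ((Function.LeftInverse.injective hroot1).iterate μ)

theorem frobTwist_zero (hroot : ∀ c, root c ^ q = c) (l μ : ℕ) : frobTwist root q l μ 0 = 0 := by
  have hq := ne_zero_of_forall_root_pow hroot
  simp only [frobTwist, Function.comp_apply]
  rw [Function.iterate_fixed (eq_zero_of_pow_eq_zero (hroot 0)),
    Function.iterate_fixed (f := (· ^ q)) (zero_pow hq)]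

theorem frobTwist_mul_prod_pow (hroot1 : ∀ c, root c ^ q = c) (hroot2 : ∀ c, root (c ^ q) = c)
    (l μ : ℕ) (a : L) (b : Fin n → L) (e : Fin n → ℕ) :
    frobTwist root q l μ (a * ∏ j, b j ^ e j) =
      frobTwist root q l μ a * ∏ j, frobTwist root q l μ (b j) ^ e j := by
  let frob : Monoid.End L := powMonoidHom q
  let θ : Monoid.End L := frob ^ l * rootHom root hroot1 hroot2 ^ μ
  have hθ : ⇑θ = frobTwist root q l μ := rfl
  simp only [← hθ, map_mul, map_prod, map_pow]

def CIdx.mk (m : ℕ) (k : Fin n → ℕ) (h : ∀ j, m ≤ k j) : CIdx n := ⟨(m, k), h⟩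

theorem CIdx.fst_eq_of_mk_eq {m m' : ℕ} {k k' : Fin n → ℕ} {h h'}
    (he : CIdx.mk m k h = CIdx.mk m' k' h') : m = m' :=
  congrArg (fun i : CIdx n => i.1.1) he

theorem shiftUp_iterate_val (l : ℕ) (i : CIdx n) :
    (shiftUp^[l] i).1 = (i.1.1 + l, fun j => i.1.2 j + l) := by
  induction l with
  | zero => rfl
  | succ l ih =>
    rw [Function.iterate_succ_apply']
    simp only [shiftUp, ih, Prod.mk.injEq]
    exact ⟨rfl, funext fun _ => rfl⟩

theorem shiftDown_iterate_val (μ : ℕ) (i : CIdx n) :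
    (shiftDown^[μ] i).1 = (i.1.1 - μ, fun j => i.1.2 j - μ) := by
  induction μ with
  | zero => rfl
  | succ μ ih =>
    rw [Function.iterate_succ_apply']
    simp only [shiftDown, ih, Prod.mk.injEq]
    exact ⟨by omega, funext fun _ => by omega⟩

theorem tauOp_single (hq : q ≠ 0) (i : CIdx n) (a : L) :
    tauOp L q n (Finsupp.single i a) = Finsupp.single (shiftUp i) (a ^ q) := by
  rw [tauOp, Finsupp.sum_single_index (by rw [zero_pow hq, Finsupp.single_zero])]

theorem tauOp_iterate_single (hq : q ≠ 0) (l : ℕ) (i : CIdx n) (a : L) :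
    (tauOp L q n)^[l] (Finsupp.single i a) = Finsupp.single (shiftUp^[l] i) ((· ^ q)^[l] a) := by
  induction l generalizing i a with
  | zero => rfl
  | succ l ih => simp only [Function.iterate_succ_apply, tauOp_single hq, ih]

theorem dsOp_single (hroot : ∀ c, root c ^ q = c) (i : CIdx n) (a : L) :
    dsOp L root x q n (Finsupp.single i a) =
      Finsupp.single (shiftDown i) (root (carlitzBracket x q i.1.1) * root a) := by
  rw [dsOp, Finsupp.sum_single_index
    (by rw [eq_zero_of_pow_eq_zero (hroot 0), mul_zero, Finsupp.single_zero])]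
  rfl

theorem dsOp_iterate_single (hroot1 : ∀ c, root c ^ q = c) (hroot2 : ∀ c, root (c ^ q) = c)
    (μ : ℕ) (i : CIdx n) (a : L) :
    (dsOp L root x q n)^[μ] (Finsupp.single i a) =
      Finsupp.single (shiftDown^[μ] i) (root^[μ] (dsIterCoeff x q μ i.1.1 * a)) := by
  have root_mul (a b : L) : root (a * b) = root a * root b :=
    map_mul (rootHom root hroot1 hroot2) a b
  induction μ generalizing i a with
  | zero => simp [dsIterCoeff]
  | succ μ ih =>
    rw [Function.iterate_succ_apply, dsOp_single hroot1, ih, Function.iterate_succ_apply,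
      Function.iterate_succ_apply, dsIterCoeff, mul_assoc, root_mul, hroot2, root_mul]
    rfl

theorem deltaOp_iterate_single (j : Fin n) (t : ℕ) (i : CIdx n) (a : L) :
    (deltaOp L x q n j)^[t] (Finsupp.single i a) =
      Finsupp.single i (carlitzBracket x q (i.1.2 j) ^ t * a) := by
  induction t generalizing a with
  | zero => simp
  | succ t ih =>
    rw [Function.iterate_succ_apply', ih, deltaOp, Finsupp.sum_single_index (by simp),
      pow_succ, mul_comm _ (carlitzBracket _ _ _), mul_assoc]
    rfl

theorem deltaOps_single (iv : Fin n → ℕ) (i : CIdx n) (a : L) :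
    (List.ofFn fun j : Fin n => (deltaOp L x q n j)^[iv j]).foldr (· ∘ ·) id
        (Finsupp.single i a) =
      Finsupp.single i ((∏ j, carlitzBracket x q (i.1.2 j) ^ iv j) * a) := by
  suffices ∀ js : List (Fin n), (js.map fun j => (deltaOp L x q n j)^[iv j]).foldr (· ∘ ·) id
      (Finsupp.single i a) =
        Finsupp.single i ((js.map fun j => carlitzBracket x q (i.1.2 j) ^ iv j).prod * a) by
    rw [List.ofFn_eq_map, this, ← List.ofFn_eq_map, List.prod_ofFn]
  intro js
  induction js with
  | nil => simp
  | cons j js ih =>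
    simp only [List.map_cons, List.foldr_cons, Function.comp_apply, ih, deltaOp_iterate_single,
      List.prod_cons, mul_assoc]

theorem monOp_single (hroot1 : ∀ c, root c ^ q = c) (hroot2 : ∀ c, root (c ^ q) = c)
    (l μ : ℕ) (iv : Fin n → ℕ) (i : CIdx n) :
    monOp L root x q n l μ iv (Finsupp.single i 1) =
      Finsupp.single (shiftUp^[l] (shiftDown^[μ] i))
        (frobTwist root q l μ
          (dsIterCoeff x q μ i.1.1 * ∏ j, carlitzBracket x q (i.1.2 j) ^ iv j)) := by
  rw [monOp, Function.comp_apply, Function.comp_apply, deltaOps_single, mul_one,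
    dsOp_iterate_single hroot1 hroot2, tauOp_iterate_single (ne_zero_of_forall_root_pow hroot1)]
  rfl

theorem monOp_single_eq_zero_of_lt (hroot1 : ∀ c, root c ^ q = c)
    (hroot2 : ∀ c, root (c ^ q) = c) {l μ : ℕ} (iv : Fin n → ℕ) {i : CIdx n} (h : i.1.1 < μ) :
    monOp L root x q n l μ iv (Finsupp.single i 1) = 0 := by
  rw [monOp_single hroot1 hroot2, dsIterCoeff_eq_zero_of_lt (ne_zero_of_forall_root_pow hroot1) h,
    zero_mul, frobTwist_zero hroot1, Finsupp.single_zero]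

theorem monOp_single_bottom (hroot1 : ∀ c, root c ^ q = c) (hroot2 : ∀ c, root (c ^ q) = c)
    (l μ : ℕ) (iv : Fin n → ℕ) (k : Fin n → ℕ) (hk : ∀ j, μ ≤ k j) :
    monOp L root x q n l μ iv (Finsupp.single (CIdx.mk μ k hk) 1) =
      Finsupp.single (CIdx.mk l (fun j => k j - μ + l) fun _ => Nat.le_add_left l _)
        (frobTwist root q l μ (dsIterCoeff x q μ μ) *
          ∏ j, frobTwist root q l μ (carlitzBracket x q (k j)) ^ iv j) := by
  rw [monOp_single hroot1 hroot2, frobTwist_mul_prod_pow hroot1 hroot2]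
  congr 1
  apply Subtype.ext
  rw [shiftUp_iterate_val, shiftDown_iterate_val]
  simp [CIdx.mk]

theorem sum_layer_eq_zero_of_sum_monOp_eq_zero (hroot1 : ∀ c, root c ^ q = c)
    (hroot2 : ∀ c, root (c ^ q) = c) {s : Finset (ℕ × ℕ × (Fin n → ℕ))}
    {g : ℕ × ℕ × (Fin n → ℕ) → L}
    (hg : ∑ t ∈ s, g t • monOp L root x q n t.1 t.2.1 t.2.2 = 0) {l₀ μ₀ : ℕ}
    (hlow : ∀ t ∈ s, t.2.1 < μ₀ → g t = 0) (k : Fin n → ℕ) (hk : ∀ j, μ₀ ≤ k j) :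
    ∑ t ∈ s with t.1 = l₀ ∧ t.2.1 = μ₀, g t * frobTwist root q l₀ μ₀ (dsIterCoeff x q μ₀ μ₀) *
      ∏ j, frobTwist root q l₀ μ₀ (carlitzBracket x q (k j)) ^ t.2.2 j = 0 := by
  classical
  have h := congrArg (fun T => T (Finsupp.single (CIdx.mk μ₀ k hk) 1)
    (CIdx.mk l₀ (fun j => k j - μ₀ + l₀) fun _ => Nat.le_add_left l₀ _)) hg
  simp only [Finset.sum_apply, Pi.smul_apply, Finsupp.finsetSum_apply, Finsupp.smul_apply,
    smul_eq_mul, Pi.zero_apply, Finsupp.coe_zero] at h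
  rw [Finset.sum_filter]
  refine Eq.trans (Finset.sum_congr rfl fun ⟨l, μ, iv⟩ ht => ?_) h
  rcases lt_trichotomy μ μ₀ with hlt | rfl | hgt
  · simp [hlow _ ht hlt, hlt.ne]
  · rw [monOp_single_bottom hroot1 hroot2, Finsupp.single_apply]
    by_cases hl : l = l₀
    · subst hl
      simp [mul_assoc]
    · rw [if_neg fun he => hl (CIdx.fst_eq_of_mk_eq he)]
      simp [hl]
  · rw [monOp_single_eq_zero_of_lt hroot1 hroot2 _ (i := CIdx.mk μ₀ k hk) hgt]
    simp [hgt.ne']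

theorem linearIndependent_monOp (hroot1 : ∀ c, root c ^ q = c) (hroot2 : ∀ c, root (c ^ q) = c)
    (hbr : Function.Injective (carlitzBracket x q)) :
    LinearIndependent L fun t : ℕ × ℕ × (Fin n → ℕ) => monOp L root x q n t.1 t.2.1 t.2.2 := by
  classical
  rw [linearIndependent_iff']
  intro s g hg
  suffices ∀ μ₀ l₀ iv₀, (l₀, μ₀, iv₀) ∈ s → g (l₀, μ₀, iv₀) = 0 from
    fun t ht => this t.2.1 t.1 t.2.2 ht
  intro μ₀
  induction μ₀ using Nat.strong_induction_on with
  | _ μ₀ ih =>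
  intro l₀ iv₀ ht₀
  set θ := frobTwist root q l₀ μ₀
  set layer := s.filter fun t => t.1 = l₀ ∧ t.2.1 = μ₀
  let S : Fin n → Set L := fun _ => θ ∘ carlitzBracket x q '' Set.Ici μ₀
  have hθ := frobTwist_injective hroot1 hroot2 l₀ μ₀
  have hmono := linearIndependent_prod_pow_restrict_pi S
    fun _ => (Set.Ici_infinite μ₀).image (hθ.comp hbr).injOn
  have hinj : Set.InjOn (fun t : ℕ × ℕ × (Fin n → ℕ) => t.2.2) layer := by
    intro t ht t' ht' h
    simp only [layer, Finset.coe_filter, Set.mem_ofPred_eq] at ht ht'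
    exact Prod.ext (ht.2.1.trans ht'.2.1.symm) (Prod.ext (ht.2.2.trans ht'.2.2.symm) h)
  have hlayer := linearIndepOn_finset_iff.1 ((hmono.linearIndepOn _).comp_of_image hinj)
  have hcoeff := hlayer (fun t => g t * θ (dsIterCoeff x q μ₀ μ₀)) ?rel (l₀, μ₀, iv₀)
    (by simp [layer, ht₀])
  · have hbr0 (k : ℕ) (hk : 0 < k) : carlitzBracket x q k ≠ 0 := fun h =>
      hk.ne' (hbr (h.trans carlitzBracket_zero.symm))
    refine (mul_eq_zero.1 hcoeff).resolve_right fun h => ?_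
    exact dsIterCoeff_self_ne_zero hbr0 μ₀ (hθ (h.trans (frobTwist_zero hroot1 l₀ μ₀).symm))
  case rel =>
    ext ⟨y, hy⟩
    choose k hk hyk using fun j => hy j (Set.mem_univ j)
    simp only [Finset.sum_apply, Pi.smul_apply, Function.comp_apply, smul_eq_mul, ← hyk]
    exact sum_layer_eq_zero_of_sum_monOp_eq_zero hroot1 hroot2 hg
      (fun t ht hlt => ih _ hlt _ _ ht) k hk

end CarlitzOperators

theorem carlitz_filtration_dim_general
    (p e q : ℕ) [Fact p.Prime] (he : 0 < e) (hq : q = p ^ e)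
    (L : Type) [Field L]
    (φ : RatFunc (GaloisField p e) →+* L)
    (root : L → L) (hroot1 : ∀ c, root c ^ q = c) (hroot2 : ∀ c, root (c ^ q) = c)
    (n : ℕ) (ν : ℕ) :
    Module.finrank L (Submodule.span L
      {T : (CIdx n →₀ L) → (CIdx n →₀ L) |
        ∃ (l μ : ℕ) (iv : Fin n → ℕ), l + μ + ∑ j, iv j ≤ ν ∧
          T = monOp L root (φ RatFunc.X) q n l μ iv}) =
      (ν + n + 2).choose (n + 2) := by
  have hq2 : 2 ≤ q := hq ▸ Nat.one_lt_pow he.ne' (Fact.out : p.Prime).one_lt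
  let Idx := {t : ℕ × ℕ × (Fin n → ℕ) // t.1 + t.2.1 + ∑ j, t.2.2 j ≤ ν}
  have hspan : {T : (CIdx n →₀ L) → (CIdx n →₀ L) |
      ∃ (l μ : ℕ) (iv : Fin n → ℕ), l + μ + ∑ j, iv j ≤ ν ∧
        T = monOp L root (φ RatFunc.X) q n l μ iv} =
      Set.range fun t : Idx => monOp L root (φ RatFunc.X) q n t.1.1 t.1.2.1 t.1.2.2 := by
    ext T
    constructor
    · rintro ⟨l, μ, iv, h, rfl⟩
      exact ⟨⟨(l, μ, iv), h⟩, rfl⟩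
    · rintro ⟨⟨⟨l, μ, iv⟩, h⟩, rfl⟩
      exact ⟨l, μ, iv, h, rfl⟩
  have hli : LinearIndependent L
      fun t : Idx => monOp L root (φ RatFunc.X) q n t.1.1 t.1.2.1 t.1.2.2 :=
    (linearIndependent_monOp hroot1 hroot2 (carlitzBracket_X_injective φ hq2)).comp _
      Subtype.val_injective
  have : Fintype Idx := .ofFinite _
  rw [hspan, finrank_span_eq_card hli, Fintype.card_eq_nat_card, Nat.card_triple_sum_le_eq_choose]

/-- **Dimension of the Bernstein-type filtration step `Γ_ν` (Lemma 1).**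
For `ν ≥ 1`, the `L`-dimension of the span of the monomial operators
`τ^l ∘ d_s^μ ∘ Δ₁^{i₁} ∘ … ∘ Δ_n^{i_n}` with `l + μ + i₁ + ⋯ + i_n ≤ ν`
equals `C(ν + n + 2, n + 2)`. -/
theorem carlitz_filtration_dim
    (p e q : ℕ) [Fact p.Prime] (he : 0 < e) (hq : q = p ^ e)
    (L : Type) [Field L] [IsAlgClosed L] [CharP L p]
    (φ : RatFunc (GaloisField p e) →+* L)
    (root : L → L) (hroot1 : ∀ c, root c ^ q = c) (hroot2 : ∀ c, root (c ^ q) = c)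
    (n : ℕ) (ν : ℕ) (hν : 1 ≤ ν) :
    Module.finrank L (Submodule.span L
      {T : (CIdx n →₀ L) → (CIdx n →₀ L) |
        ∃ (l μ : ℕ) (iv : Fin n → ℕ), l + μ + ∑ j, iv j ≤ ν ∧
          T = monOp L root (φ RatFunc.X) q n l μ iv}) =
      (ν + n + 2).choose (n + 2) :=
  carlitz_filtration_dim_general p e q he hq L φ root hroot1 hroot2 n ν
end

section
/- Let π ∈ F_q[x] be a monic irreducible polynomial of degree δ, and let 0 ≤ m ≤ k. Write m = jδ + i and k − m = κδ + λ with j, κ ≥ 0 and 0 ≤ i, λ < δ. Then the π-adic valuation of the K-binomial coefficient is: v_π(binom(k,m)_K) = q^i·(q^λ − 1)·(q^{jδ} − 1)/(q^δ − 1) if i + λ < δ; and v_π(binom(k,m)_K) = (q^i + q^{i+λ+jδ} − q^{i+jδ} − q^{i+λ−δ})/(q^δ − 1) if i + λ ≥ δ. In both cases the valuation is a nonnegative integer. -/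
/-! An irreducible `π` of degree `δ` divides `[n] = x^{q^n} - x` exactly when `δ ∣ n`, and then
only once since `[n]` is separable. The recursion `D_{n+1} = [n+1] · D_n^q` then gives
`v_π(D_n) = q^r (q^{δt} - 1)/(q^δ - 1)` for `n = tδ + r`, `r < δ`, and
`v_π(binom(k,m)_K) = v_π(D_k) - v_π(D_m) - q^m v_π(D_{k-m})`. Writing
`k = (j + κ)δ + (i + λ)`, the two cases are whether `i + λ` carries past `δ`; in both the
resulting expression is visibly nonnegative. -/

noncomputable section

open Polynomial

/-- The Carlitz factorial `D_i = [i]·[i-1]^q ⋯ [1]^{q^{i-1}} ∈ F_q[x]`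
(where `[i] = x^{q^i} - x`), defined via `D_0 = 1`, `D_{i+1} = [i+1]·D_i^q`. -/
def Dcar (q : ℕ) (F : Type) [Field F] : ℕ → Polynomial F
  | 0 => 1
  | i + 1 => (X ^ q ^ (i + 1) - X) * (Dcar q F i) ^ q

/-- `L_i = [i]·[i-1] ⋯ [1] ∈ F_q[x]`, via `L_0 = 1`, `L_{i+1} = [i+1]·L_i`. -/
def Lcar (q : ℕ) (F : Type) [Field F] : ℕ → Polynomial F
  | 0 => 1
  | i + 1 => (X ^ q ^ (i + 1) - X) * Lcar q F i

/-- The `K`-binomial coefficient `binom(k,m)_K = D_k/(D_m · D_{k-m}^{q^m}) ∈ F_q(x)`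
for `0 ≤ m ≤ k`, with the convention that it vanishes for `m < 0` or `m > k`. -/
def Kb (q : ℕ) (F : Type) [Field F] (k : ℕ) (m : ℤ) : RatFunc F :=
  if 0 ≤ m ∧ m ≤ (k : ℤ) then
    algebraMap (Polynomial F) (RatFunc F) (Dcar q F k) /
      (algebraMap (Polynomial F) (RatFunc F) (Dcar q F m.toNat) *
        algebraMap (Polynomial F) (RatFunc F) (Dcar q F (k - m.toNat)) ^ q ^ m.toNat)
  else 0

/-- The `π`-adic additive valuation `v_π` on `F_q(x)`, normalized by `v_π(π) = 1`
(for `π` irreducible): the multiplicity of `π` in the numerator minus the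
multiplicity of `π` in the denominator. -/
def vpol {F : Type} [Field F] (π : Polynomial F) (t : RatFunc F) : ℤ :=
  (multiplicity π t.num : ℤ) - (multiplicity π t.denom : ℤ)

theorem Dcar_ne_zero {F : Type} [Field F] {q : ℕ} (hq : 1 < q) (n : ℕ) : Dcar q F n ≠ 0 := by
  induction n with
  | zero => exact one_ne_zero
  | succ n ih =>
    exact mul_ne_zero (FiniteField.X_pow_card_pow_sub_X_ne_zero F n.succ_ne_zero hq)
      (pow_ne_zero _ ih)

theorem vpol_algebraMap_div {F : Type} [Field F] {π A B : F[X]} (hπ : Prime π)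
    (hA : A ≠ 0) (hB : B ≠ 0) :
    vpol π (algebraMap F[X] (RatFunc F) A / algebraMap F[X] (RatFunc F) B)
      = (multiplicity π A : ℤ) - multiplicity π B := by
  set t := algebraMap F[X] (RatFunc F) A / algebraMap F[X] (RatFunc F) B
  have hnum : t.num ≠ 0 := RatFunc.num_ne_zero <|
    div_ne_zero (RatFunc.algebraMap_ne_zero hA) (RatFunc.algebraMap_ne_zero hB)
  have hcross : t.num * B = A * t.denom := by
    apply IsFractionRing.injective F[X] (RatFunc F)
    rw [map_mul, map_mul, ← div_eq_div_iff (RatFunc.algebraMap_ne_zero t.denom_ne_zero)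
      (RatFunc.algebraMap_ne_zero hB), RatFunc.num_div_denom]
  have hmul := congrArg (multiplicity π) hcross
  rw [multiplicity_mul hπ (.of_not_isUnit hπ.not_isUnit (mul_ne_zero hnum hB)),
    multiplicity_mul hπ (.of_not_isUnit hπ.not_isUnit (mul_ne_zero hA t.denom_ne_zero))]
    at hmul
  unfold vpol
  omega

theorem mul_pow_sub_one_eq_of_recurrence {q : ℤ} {δ : ℕ} {s : ℕ → ℤ} (h0 : s 0 = 0)
    (hs : ∀ n, s (n + 1) = (if δ ∣ n + 1 then 1 else 0) + q * s n) (n : ℕ) :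
    s n * (q ^ δ - 1) = q ^ (n % δ) * (q ^ (δ * (n / δ)) - 1) := by
  induction n with
  | zero => simp [h0]
  | succ n ih =>
    have hdiv := Nat.mod_add_div n δ
    have hdiv' := Nat.mod_add_div (n + 1) δ
    by_cases hd : δ ∣ n + 1
    · have hquot := Nat.succ_div_of_dvd hd
      have hpow : q ^ δ = q ^ (n % δ) * q := by
        rw [← pow_succ]
        congr 1
        rw [Nat.mod_eq_zero_of_dvd hd, hquot, mul_add_one] at hdiv'
        omega
      rw [hs, if_pos hd, Nat.mod_eq_zero_of_dvd hd, hquot, mul_add_one, pow_add]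
      linear_combination q * ih + (1 - q ^ (δ * (n / δ))) * hpow
    · have hquot := Nat.succ_div_of_not_dvd hd
      have hmod : (n + 1) % δ = n % δ + 1 := by
        rw [hquot] at hdiv'
        omega
      rw [hs, if_neg hd, hmod, hquot, pow_succ]
      linear_combination q * ih

section FiniteField

variable {F : Type} [Field F] [Finite F] {π : F[X]}

theorem multiplicity_X_pow_card_pow_sub_X (hπ : Irreducible π) {n : ℕ} (hn : n ≠ 0) :
    multiplicity π (X ^ Nat.card F ^ n - X : F[X]) = if π.natDegree ∣ n then 1 else 0 := by
  split_ifs with hdvd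
  · have hne : (X ^ Nat.card F ^ n - X : F[X]) ≠ 0 :=
      FiniteField.X_pow_card_pow_sub_X_ne_zero F hn Finite.one_lt_card
    have := Fintype.ofFinite F
    have hsep : (X ^ Nat.card F ^ n - X : F[X]).Separable :=
      galois_poly_separable (ringChar F) _ <| dvd_pow (ringChar.dvd <| by
        rw [Nat.card_eq_fintype_card]; exact Nat.cast_card_eq_zero F) hn
    rw [(FiniteMultiplicity.of_not_isUnit hπ.not_isUnit hne).multiplicity_eq_iff]
    refine ⟨by simpa using hπ.natDegree_dvd_iff_dvd_X_pow_card_pow_sub_X.mp hdvd, fun hsq ↦ ?_⟩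
    exact hπ.not_isUnit (hsep.squarefree π (by simpa [sq] using hsq))
  · exact multiplicity_eq_zero.mpr (mt hπ.natDegree_dvd_iff_dvd_X_pow_card_pow_sub_X.mpr hdvd)

theorem multiplicity_Dcar_succ (hπ : Irreducible π) (n : ℕ) :
    multiplicity π (Dcar (Nat.card F) F (n + 1))
      = (if π.natDegree ∣ n + 1 then 1 else 0)
        + Nat.card F * multiplicity π (Dcar (Nat.card F) F n) := by
  have hp := hπ.prime
  have hD := Dcar_ne_zero (F := F) (Finite.one_lt_card (α := F))
  rw [Dcar, multiplicity_mul hp (.of_not_isUnit hp.not_isUnit (hD (n + 1))),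
    (FiniteMultiplicity.of_not_isUnit hp.not_isUnit (hD n)).multiplicity_pow hp,
    multiplicity_X_pow_card_pow_sub_X hπ n.succ_ne_zero]

theorem multiplicity_Dcar_mul_pow_sub_one (hπ : Irreducible π) (n : ℕ) :
    (multiplicity π (Dcar (Nat.card F) F n) : ℤ) * ((Nat.card F : ℤ) ^ π.natDegree - 1)
      = (Nat.card F : ℤ) ^ (n % π.natDegree)
        * ((Nat.card F : ℤ) ^ (π.natDegree * (n / π.natDegree)) - 1) := by
  refine mul_pow_sub_one_eq_of_recurrence
    (s := fun n ↦ (multiplicity π (Dcar (Nat.card F) F n) : ℤ)) ?_ (fun n ↦ ?_) n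
  · exact Nat.cast_eq_zero.mpr <|
      multiplicity_eq_zero.mpr fun h ↦ hπ.not_isUnit (isUnit_of_dvd_one h)
  · simp only [multiplicity_Dcar_succ hπ]
    push_cast
    rfl

theorem multiplicity_Dcar_mul_add_of_lt (hπ : Irreducible π) {r : ℕ} (hr : r < π.natDegree)
    (t : ℕ) :
    (multiplicity π (Dcar (Nat.card F) F (t * π.natDegree + r)) : ℤ)
        * ((Nat.card F : ℤ) ^ π.natDegree - 1)
      = (Nat.card F : ℤ) ^ r * ((Nat.card F : ℤ) ^ (t * π.natDegree) - 1) := by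
  have hdiv : (t * π.natDegree + r) / π.natDegree = t := by
    rw [mul_comm, Nat.mul_add_div (hr.trans_le' (Nat.zero_le r)), Nat.div_eq_of_lt hr, add_zero]
  have h := multiplicity_Dcar_mul_pow_sub_one hπ (t * π.natDegree + r)
  rwa [Nat.mul_add_mod_of_lt hr, hdiv, mul_comm π.natDegree] at h

theorem vpol_Kb (hπ : Irreducible π) {k m : ℕ} (hmk : m ≤ k) :
    vpol π (Kb (Nat.card F) F k m)
      = (multiplicity π (Dcar (Nat.card F) F k) : ℤ) - multiplicity π (Dcar (Nat.card F) F m)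
        - (Nat.card F : ℤ) ^ m * multiplicity π (Dcar (Nat.card F) F (k - m)) := by
  have hp := hπ.prime
  have hD := Dcar_ne_zero (F := F) (Finite.one_lt_card (α := F))
  have hden := mul_ne_zero (hD m) (pow_ne_zero (Nat.card F ^ m) (hD (k - m)))
  rw [Kb, if_pos ⟨Int.natCast_nonneg m, by exact_mod_cast hmk⟩, Int.toNat_natCast, ← map_pow,
    ← map_mul, vpol_algebraMap_div hp (hD k) hden,
    multiplicity_mul hp (.of_not_isUnit hp.not_isUnit hden),
    (FiniteMultiplicity.of_not_isUnit hp.not_isUnit (hD (k - m))).multiplicity_pow hp]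
  push_cast
  ring

theorem vpol_Kb_mul_of_add_lt (hπ : Irreducible π) {i lam : ℕ} (j κ : ℕ)
    (hcarry : i + lam < π.natDegree) :
    vpol π (Kb (Nat.card F) F (j * π.natDegree + i + (κ * π.natDegree + lam))
        (j * π.natDegree + i : ℕ)) * ((Nat.card F : ℤ) ^ π.natDegree - 1)
      = (Nat.card F : ℤ) ^ i * ((Nat.card F : ℤ) ^ lam - 1)
        * ((Nat.card F : ℤ) ^ (j * π.natDegree) - 1) := by
  have hk := multiplicity_Dcar_mul_add_of_lt hπ hcarry (j + κ)
  rw [show (j + κ) * π.natDegree + (i + lam) = j * π.natDegree + i + (κ * π.natDegree + lam) by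
    ring] at hk
  rw [vpol_Kb hπ (Nat.le_add_right _ _), Nat.add_sub_cancel_left]
  linear_combination hk - multiplicity_Dcar_mul_add_of_lt hπ (by omega : i < π.natDegree) j
    - (Nat.card F : ℤ) ^ (j * π.natDegree + i)
      * multiplicity_Dcar_mul_add_of_lt hπ (by omega : lam < π.natDegree) κ

theorem vpol_Kb_mul_of_le_add (hπ : Irreducible π) {i lam : ℕ} (j κ : ℕ)
    (hi : i < π.natDegree) (hlam : lam < π.natDegree) (hcarry : π.natDegree ≤ i + lam) :
    vpol π (Kb (Nat.card F) F (j * π.natDegree + i + (κ * π.natDegree + lam))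
        (j * π.natDegree + i : ℕ)) * ((Nat.card F : ℤ) ^ π.natDegree - 1)
      = (Nat.card F : ℤ) ^ i + (Nat.card F : ℤ) ^ (i + lam + j * π.natDegree)
        - (Nat.card F : ℤ) ^ (i + j * π.natDegree)
        - (Nat.card F : ℤ) ^ (i + lam - π.natDegree) := by
  obtain ⟨r, hr⟩ := Nat.exists_eq_add_of_le hcarry
  have hk := multiplicity_Dcar_mul_add_of_lt hπ (by omega : r < π.natDegree) (j + κ + 1)
  rw [show (j + κ + 1) * π.natDegree + r = j * π.natDegree + i + (κ * π.natDegree + lam) by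
    rw [add_mul, add_mul, one_mul]; omega] at hk
  have hpow : (Nat.card F : ℤ) ^ i * (Nat.card F : ℤ) ^ lam
      = (Nat.card F : ℤ) ^ π.natDegree * (Nat.card F : ℤ) ^ r := by
    rw [← pow_add, ← pow_add, hr]
  rw [vpol_Kb hπ (Nat.le_add_right _ _), Nat.add_sub_cancel_left, hr, Nat.add_sub_cancel_left]
  linear_combination hk - multiplicity_Dcar_mul_add_of_lt hπ hi j
    - (Nat.card F : ℤ) ^ (j * π.natDegree + i) * multiplicity_Dcar_mul_add_of_lt hπ hlam κ
    - (Nat.card F : ℤ) ^ (j * π.natDegree) * ((Nat.card F : ℤ) ^ (κ * π.natDegree) - 1)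
      * hpow

end FiniteField

theorem vpol_Kbinom_general
    (p e q : ℕ) [Fact p.Prime] (he : 0 < e) (hq : q = p ^ e)
    (π : Polynomial (GaloisField p e)) (hirr : Irreducible π)
    (δ : ℕ) (hδ : δ = π.natDegree)
    (k m j i κ lam : ℕ) (hmk : m ≤ k)
    (hm : m = j * δ + i) (hi : i < δ)
    (hkm : k - m = κ * δ + lam) (hlam : lam < δ) :
    (if i + lam < δ then
        vpol π (Kb q (GaloisField p e) k (m : ℤ)) * ((q : ℤ) ^ δ - 1)
          = (q : ℤ) ^ i * ((q : ℤ) ^ lam - 1) * ((q : ℤ) ^ (j * δ) - 1)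
      else
        vpol π (Kb q (GaloisField p e) k (m : ℤ)) * ((q : ℤ) ^ δ - 1)
          = (q : ℤ) ^ i + (q : ℤ) ^ (i + lam + j * δ)
            - (q : ℤ) ^ (i + j * δ) - (q : ℤ) ^ (i + lam - δ)) ∧
    0 ≤ vpol π (Kb q (GaloisField p e) k (m : ℤ)) := by
  have hcard : Nat.card (GaloisField p e) = q := by rw [hq, GaloisField.card p e he.ne']
  have hq1 : (1 : ℤ) < q := by exact_mod_cast hcard ▸ Finite.one_lt_card
  subst hδ hm
  obtain rfl : k = j * π.natDegree + i + (κ * π.natDegree + lam) := by omega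
  have hpos : (0 : ℤ) < (q : ℤ) ^ π.natDegree - 1 :=
    sub_pos.2 (one_lt_pow₀ hq1 hirr.natDegree_pos.ne')
  split_ifs with hcarry
  · have h := vpol_Kb_mul_of_add_lt hirr j κ hcarry
    rw [hcard] at h
    refine ⟨h, (mul_nonneg_iff_of_pos_right hpos).mp (h ▸ ?_)⟩
    exact mul_nonneg (mul_nonneg (by positivity) (sub_nonneg.2 (one_le_pow₀ hq1.le)))
      (sub_nonneg.2 (one_le_pow₀ hq1.le))
  · have h := vpol_Kb_mul_of_le_add hirr j κ hi hlam (not_lt.1 hcarry)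
    rw [hcard] at h
    refine ⟨h, (mul_nonneg_iff_of_pos_right hpos).mp (h ▸ ?_)⟩
    have h1 := pow_le_pow_right₀ hq1.le
      (by omega : i + j * π.natDegree ≤ i + lam + j * π.natDegree)
    have h2 := pow_le_pow_right₀ hq1.le (by omega : i + lam - π.natDegree ≤ i)
    linarith

/-- **`π`-adic valuation of the `K`-binomial coefficients (proof of Proposition 4).**
For `π` monic irreducible of degree `δ`, `0 ≤ m ≤ k`, `m = jδ + i`,
`k − m = κδ + λ` with `0 ≤ i, λ < δ`:
if `i + λ < δ` then `v_π(binom(k,m)_K) = q^i(q^λ − 1)(q^{jδ} − 1)/(q^δ − 1)`,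
and if `i + λ ≥ δ` then
`v_π(binom(k,m)_K) = (q^i + q^{i+λ+jδ} − q^{i+jδ} − q^{i+λ−δ})/(q^δ − 1)`
(both stated in denominator-cleared form); in both cases the valuation is
nonnegative. -/
theorem vpol_Kbinom
    (p e q : ℕ) [Fact p.Prime] (he : 0 < e) (hq : q = p ^ e)
    (π : Polynomial (GaloisField p e)) (hmon : π.Monic) (hirr : Irreducible π)
    (δ : ℕ) (hδ : δ = π.natDegree)
    (k m j i κ lam : ℕ) (hmk : m ≤ k)
    (hm : m = j * δ + i) (hi : i < δ)
    (hkm : k - m = κ * δ + lam) (hlam : lam < δ) :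
    (if i + lam < δ then
        vpol π (Kb q (GaloisField p e) k (m : ℤ)) * ((q : ℤ) ^ δ - 1)
          = (q : ℤ) ^ i * ((q : ℤ) ^ lam - 1) * ((q : ℤ) ^ (j * δ) - 1)
      else
        vpol π (Kb q (GaloisField p e) k (m : ℤ)) * ((q : ℤ) ^ δ - 1)
          = (q : ℤ) ^ i + (q : ℤ) ^ (i + lam + j * δ)
            - (q : ℤ) ^ (i + j * δ) - (q : ℤ) ^ (i + lam - δ)) ∧
    0 ≤ vpol π (Kb q (GaloisField p e) k (m : ℤ)) :=
  vpol_Kbinom_general p e q he hq π hirr δ hδ k m j i κ lam hmk hm hi hkm hlam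
end
end
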